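/- Let Θ : A* → A* be an involutive antimorphism and let u ∈ A^ℕ be a recurrent infinite word with finite Θ-palindromic defect. Then infinitely many prefixes of u are Θ-palindromes. -/
import Mathlib


/-!
Basic notions from combinatorics on words: involutive antimorphisms,
Θ-palindromes, factors of infinite words, palindromic defect, richness.
-/

/-- `Θ` is an involutive antimorphism of the free monoid `A*` (words as lists). -/
def IsAntimorphism {A : Type*} (Θ : List A → List A) : Prop :=
  (∀ x y : List A, Θ (x ++ y) = Θ y ++ Θ x) ∧ ∀ x : List A, Θ (Θ x) = x

/-- The factor `u_i u_{i+1} … u_{i+n-1}` of the infinite word `u`. -/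
def factorAt {A : Type*} (u : ℕ → A) (i n : ℕ) : List A :=
  (List.range n).map fun k => u (i + k)

/-- `i` is an occurrence of `w` in the infinite word `u`. -/
def OccursAt {A : Type*} (u : ℕ → A) (w : List A) (i : ℕ) : Prop :=
  w = factorAt u i w.length

/-- `w` is a factor of the infinite word `u`. -/
def IsFactorOf {A : Type*} (w : List A) (u : ℕ → A) : Prop :=
  ∃ i, OccursAt u w i

/-- The prefix of length `n` of the infinite word `u`. -/
def prefixWord {A : Type*} (u : ℕ → A) (n : ℕ) : List A :=
  factorAt u 0 n

/-- `u` is recurrent: every factor has infinitely many occurrences. -/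
def Recurrent {A : Type*} (u : ℕ → A) : Prop :=
  ∀ w, IsFactorOf w u → ∀ N, ∃ i, N ≤ i ∧ OccursAt u w i

/-- `u` is uniformly recurrent: every factor occurs with bounded gaps
(equivalently, every factor has finitely many return words). -/
def UniformlyRecurrent {A : Type*} (u : ℕ → A) : Prop :=
  ∀ w, IsFactorOf w u → ∃ R, ∀ N, ∃ i, N ≤ i ∧ i < N + R ∧ OccursAt u w i

/-- `i` is an occurrence of the word `s` in the finite word `r`. -/
def OccursIn {A : Type*} (s r : List A) (i : ℕ) : Prop :=
  i + s.length ≤ r.length ∧ s = (r.drop i).take s.length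

/-- `s` occurs exactly once in `r`. -/
def Unioccurrent {A : Type*} (s r : List A) : Prop :=
  Set.ncard {i | OccursIn s r i} = 1

/-- The set `Pal_Θ(w)` of `Θ`-palindromic factors of the finite word `w`
(the empty word included). -/
def palSet {A : Type*} (Θ : List A → List A) (w : List A) : Set (List A) :=
  {p | p <:+: w ∧ Θ p = p}

/-- `γ_Θ(w)`: the number of pairs `{a, Θ(a)}` where `a` is a letter occurring
in `w` with `a ≠ Θ(a)`. -/
noncomputable def gammaTheta {A : Type*} (Θ : List A → List A) (w : List A) : ℕ :=
  Set.ncard {P : Set A | ∃ a, a ∈ w ∧ Θ [a] ≠ [a] ∧ P = {b | [b] = [a] ∨ [b] = Θ [a]}}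

/-- The `Θ`-palindromic defect `D_Θ(w) = |w| + 1 - γ_Θ(w) - #Pal_Θ(w)` of a finite word. -/
noncomputable def defect {A : Type*} (Θ : List A → List A) (w : List A) : ℤ :=
  (w.length : ℤ) + 1 - gammaTheta Θ w - (palSet Θ w).ncard

/-- The infinite word `u` has finite `Θ`-palindromic defect
(`D_Θ(u) = sup { D_Θ(w) : w factor of u } < ∞`), i.e. `u` is almost `Θ`-rich. -/
def FiniteDefect {A : Type*} (Θ : List A → List A) (u : ℕ → A) : Prop :=
  ∃ C : ℤ, ∀ w, IsFactorOf w u → defect Θ w ≤ C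

/-- The infinite word `u` is `Θ`-rich: every factor `w` satisfies
`#Pal_Θ(w) = |w| + 1 - γ_Θ(w)`, i.e. has zero `Θ`-defect. -/
def RichWord {A : Type*} (Θ : List A → List A) (u : ℕ → A) : Prop :=
  ∀ w, IsFactorOf w u → defect Θ w = 0

/-- The language of `u` is closed under `Θ`. -/
def LangClosedUnder {A : Type*} (Θ : List A → List A) (u : ℕ → A) : Prop :=
  ∀ w, IsFactorOf w u → IsFactorOf (Θ w) u

/-- `u` is the image of the infinite word `v` under the monoid morphism
`B* → A*` determined by `φ` on letters, i.e. `u = φ(v₀)φ(v₁)φ(v₂)…`. -/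
def IsMorphicImage {A B : Type*} (u : ℕ → A) (φ : B → List A) (v : ℕ → B) : Prop :=
  (∀ n, OccursAt u ((prefixWord v n).flatMap φ) 0) ∧
    ∀ N, ∃ n, N ≤ ((prefixWord v n).flatMap φ).length

/-- The occurrences of `w` and `w'` in `u` alternate: listing in increasing order
all occurrences of `w` or `w'`, consecutive indices are alternately occurrences
of `w` and of `w'` (between two occurrences of one of them, the second of which is
not an occurrence of the other, there is an occurrence of the other). -/
def AlternateIn {A : Type*} (u : ℕ → A) (w w' : List A) : Prop :=
  (∀ i j, i < j → OccursAt u w i → OccursAt u w j → ¬ OccursAt u w' j →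
    ∃ k, i < k ∧ k < j ∧ OccursAt u w' k) ∧
  (∀ i j, i < j → OccursAt u w' i → OccursAt u w' j → ¬ OccursAt u w j →
    ∃ k, i < k ∧ k < j ∧ OccursAt u w k)

/-- Factor complexity `C(n)` of the infinite word `u`. -/
noncomputable def complexity {A : Type*} (u : ℕ → A) (n : ℕ) : ℕ :=
  Set.ncard {w : List A | IsFactorOf w u ∧ w.length = n}

/-- `Θ`-palindromic complexity `P_Θ(n)` of the infinite word `u`. -/
noncomputable def palComplexity {A : Type*} (Θ : List A → List A) (u : ℕ → A) (n : ℕ) : ℕ :=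
  Set.ncard {w : List A | IsFactorOf w u ∧ w.length = n ∧ Θ w = w}

/-- `r` is a complete return word of `w` in `u`: a factor of `u` with exactly two
occurrences of `w`, one as a prefix and one as a suffix. -/
def IsCompleteReturnWord {A : Type*} (u : ℕ → A) (w r : List A) : Prop :=
  IsFactorOf r u ∧ w <+: r ∧ w <:+ r ∧ Set.ncard {i | OccursIn w r i} = 2

section AuxLemmas

variable {A : Type*}

lemma length_factorAt (u : ℕ → A) (i n : ℕ) : (factorAt u i n).length = n := by
  simp [factorAt]

lemma length_prefixWord (u : ℕ → A) (n : ℕ) : (prefixWord u n).length = n := by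
  simp [prefixWord, factorAt]

lemma prefixWord_eq (u : ℕ → A) (n : ℕ) : prefixWord u n = (List.range n).map u := by
  simp [prefixWord, factorAt]

lemma prefixWord_add (u : ℕ → A) (a b : ℕ) :
    prefixWord u (a + b) = prefixWord u a ++ factorAt u a b := by
  rw [prefixWord_eq, prefixWord_eq, factorAt, List.range_add, List.map_append, List.map_map]
  rfl

lemma prefixWord_succ (u : ℕ → A) (n : ℕ) :
    prefixWord u (n + 1) = prefixWord u n ++ [u n] := by
  rw [prefixWord_add]
  simp [factorAt, List.range_succ]

lemma prefixWord_prefix (u : ℕ → A) {a b : ℕ} (h : a ≤ b) :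
    prefixWord u a <+: prefixWord u b := by
  obtain ⟨c, rfl⟩ := Nat.exists_eq_add_of_le h
  rw [prefixWord_add]
  exact List.prefix_append _ _

lemma drop_take_prefixWord (u : ℕ → A) {i l m : ℕ} (h : i + l ≤ m) :
    ((prefixWord u m).drop i).take l = factorAt u i l := by
  have hm : m = i + (m - i) := by omega
  rw [hm, prefixWord_add, List.drop_left' (length_prefixWord u i)]
  show (((List.range (m - i)).map fun k => u (i + k)).take l) = _
  rw [← List.map_take, List.take_range, Nat.min_eq_left (by omega)]
  rfl

lemma occursAt_of_append {u : ℕ → A} {m : ℕ} {x v y : List A}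
    (h : prefixWord u m = x ++ v ++ y) : OccursAt u v x.length := by
  have hle : x.length + v.length ≤ m := by
    have := congrArg List.length h
    simp [length_prefixWord] at this
    omega
  have h2 := drop_take_prefixWord u hle
  rw [h, List.append_assoc, List.drop_left, List.take_left] at h2
  exact h2

lemma suffix_of_occursAt {u : ℕ → A} {w : List A} {j n : ℕ} (hn : w.length = n)
    (h : OccursAt u w j) : w <:+ prefixWord u (j + n) := by
  refine ⟨prefixWord u j, ?_⟩
  rw [prefixWord_add]
  congr 1
  rw [← hn]
  exact h

lemma occursAt_prefixWord (u : ℕ → A) (n : ℕ) : OccursAt u (prefixWord u n) 0 := by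
  unfold OccursAt prefixWord
  rw [length_factorAt]

section Theta

variable {Θ : List A → List A}

lemma theta_nil (hΘ : IsAntimorphism Θ) : Θ [] = [] := by
  have h := hΘ.1 [] []
  simp only [List.append_nil] at h
  have := congrArg List.length h
  simp only [List.length_append] at this
  exact List.eq_nil_of_length_eq_zero (by omega)

lemma theta_single_ne_nil (hΘ : IsAntimorphism Θ) (a : A) : Θ [a] ≠ [] := by
  intro h
  have h2 := hΘ.2 [a]
  rw [h, theta_nil hΘ] at h2
  exact (List.cons_ne_nil a []) h2.symm

lemma theta_length_ge (hΘ : IsAntimorphism Θ) (x : List A) : x.length ≤ (Θ x).length := by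
  induction x with
  | nil => simp
  | cons a t ih =>
    have h : Θ (a :: t) = Θ t ++ Θ [a] := by
      have := hΘ.1 [a] t
      simpa using this
    rw [h, List.length_append, List.length_cons]
    have h1 : 1 ≤ (Θ [a]).length := List.length_pos_iff.2 (theta_single_ne_nil hΘ a)
    omega

lemma theta_length (hΘ : IsAntimorphism Θ) (x : List A) : (Θ x).length = x.length := by
  have h1 := theta_length_ge hΘ x
  have h2 := theta_length_ge hΘ (Θ x)
  rw [hΘ.2 x] at h2
  omega

lemma prefix_of_suffix_pal (hΘ : IsAntimorphism Θ) {s t : List A}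
    (hs : Θ s = s) (ht : Θ t = t) (h : s <:+ t) : s <+: t := by
  obtain ⟨x, hx⟩ := h
  refine ⟨Θ x, ?_⟩
  calc s ++ Θ x = Θ s ++ Θ x := by rw [hs]
    _ = Θ (x ++ s) := (hΘ.1 x s).symm
    _ = Θ t := by rw [hx]
    _ = t := ht

end Theta

lemma infix_concat {s q : List A} {a : A} (h : s <:+: q ++ [a]) :
    s <:+ q ++ [a] ∨ s <:+: q := by
  obtain ⟨x, y, hxy⟩ := h
  rcases List.eq_nil_or_concat y with rfl | ⟨z, b, rfl⟩
  · left
    exact ⟨x, by simpa using hxy⟩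
  · right
    rw [List.concat_eq_append] at hxy
    have h2 : (x ++ s ++ z) ++ [b] = q ++ [a] := by
      rw [List.append_assoc (x ++ s) z]
      exact hxy
    exact ⟨x, z, (List.append_inj' h2 rfl).1⟩

lemma palSet_finite (Θ : List A → List A) (w : List A) : (palSet Θ w).Finite := by
  apply Set.Finite.subset w.sublists.finite_toSet
  intro p hp
  exact List.mem_sublists.2 hp.1.sublist

lemma palSet_mono (Θ : List A → List A) {w v : List A} (h : w <+: v) :
    palSet Θ w ⊆ palSet Θ v :=
  fun _ hp => ⟨hp.1.trans h.isInfix, hp.2⟩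

lemma newPal_subsingleton {Θ : List A → List A} (hΘ : IsAntimorphism Θ)
    (q : List A) (a : A) :
    (palSet Θ (q ++ [a]) \ palSet Θ q).Subsingleton := by
  have hsfx : ∀ s ∈ palSet Θ (q ++ [a]) \ palSet Θ q, s <:+ q ++ [a] := by
    rintro s ⟨⟨hinf, hpal⟩, hnot⟩
    rcases infix_concat hinf with h | h
    · exact h
    · exact absurd ⟨h, hpal⟩ hnot
  have key : ∀ s ∈ palSet Θ (q ++ [a]) \ palSet Θ q,
      ∀ t ∈ palSet Θ (q ++ [a]) \ palSet Θ q, s.length < t.length → False := by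
    intro s hs t ht hlt
    have hss := hsfx s hs
    have hts := hsfx t ht
    have h1 : s <:+ t := List.suffix_of_suffix_length_le hss hts hlt.le
    obtain ⟨y, hy⟩ := prefix_of_suffix_pal hΘ hs.1.2 ht.1.2 h1
    have hy0 : y ≠ [] := by
      intro h0
      rw [h0, List.append_nil] at hy
      rw [hy] at hlt
      omega
    obtain ⟨x, hx⟩ := hts
    have hq : (x ++ s) ++ y = q ++ [a] := by
      rw [List.append_assoc, hy, hx]
    rcases List.eq_nil_or_concat y with rfl | ⟨z, b, rfl⟩
    · exact hy0 rfl
    · rw [List.concat_eq_append] at hq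
      have h2 : (x ++ s ++ z) ++ [b] = q ++ [a] := by
        rw [List.append_assoc (x ++ s) z]
        exact hq
      exact hs.2 ⟨⟨x, z, (List.append_inj' h2 rfl).1⟩, hs.1.2⟩
  intro s hs t ht
  rcases lt_trichotomy s.length t.length with h | h | h
  · exact absurd (key s hs t ht h) (by simp)
  · exact (List.suffix_of_suffix_length_le (hsfx s hs) (hsfx t ht) h.le).eq_of_length h
  · exact absurd (key t ht s hs h) (by simp)

lemma final_step {Θ : List A → List A} (hΘ : IsAntimorphism Θ) (u : ℕ → A)
    (n j' : ℕ) (W : List A)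
    (hWlen : W.length = n)
    (hWocc : OccursAt u W (j' + 1))
    (hWpre : W <:+: prefixWord u (j' + n) ∨ Θ W <:+: prefixWord u (j' + n))
    (hmin : ∀ i, 1 ≤ i → i < j' + 1 → ¬ OccursAt u (Θ W) i)
    (s : List A)
    (hsfx : s <:+ prefixWord u (j' + n + 1))
    (hpal : Θ s = s)
    (hnot : ¬ s <:+: prefixWord u (j' + n)) :
    Θ (prefixWord u (j' + n + 1)) = prefixWord u (j' + n + 1) := by
  have hWm : W <:+ prefixWord u (j' + n + 1) := by
    have h := suffix_of_occursAt hWlen hWocc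
    have he : j' + 1 + n = j' + n + 1 := by omega
    rwa [he] at h
  have hslen : n < s.length := by
    by_contra hle
    push_neg at hle
    have h1 : s <:+ W := List.suffix_of_suffix_length_le hsfx hWm (by omega)
    rcases hWpre with h2 | h2
    · exact hnot (h1.isInfix.trans h2)
    · have h3 : s <+: Θ W := by
        obtain ⟨x, hx⟩ := h1
        refine ⟨Θ x, ?_⟩
        calc s ++ Θ x = Θ s ++ Θ x := by rw [hpal]
          _ = Θ (x ++ s) := (hΘ.1 x s).symm
          _ = Θ W := by rw [hx]
      exact hnot (h3.isInfix.trans h2)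
  have hWs : W <:+ s := List.suffix_of_suffix_length_le hWm hsfx (by
    rw [hWlen]; omega)
  have hTWs : Θ W <+: s := by
    obtain ⟨x, hx⟩ := hWs
    refine ⟨Θ x, ?_⟩
    calc Θ W ++ Θ x = Θ (x ++ W) := (hΘ.1 x W).symm
      _ = Θ s := by rw [hx]
      _ = s := hpal
  obtain ⟨x, hx⟩ := hsfx
  by_cases hx0 : x = []
  · rw [hx0, List.nil_append] at hx
    rw [← hx]
    exact hpal
  · obtain ⟨y, hy⟩ := hTWs
    have hxlen : x.length + s.length = j' + n + 1 := by
      have := congrArg List.length hx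
      simp [length_prefixWord] at this
      omega
    have h1 : 1 ≤ x.length := List.length_pos_iff.2 hx0
    have h2 : x.length < j' + 1 := by omega
    have hocc : OccursAt u (Θ W) x.length := by
      apply occursAt_of_append (m := j' + n + 1) (y := y)
      rw [List.append_assoc, hy, hx]
    exact absurd hocc (hmin x.length h1 h2)

end AuxLemmas

/-- A recurrent infinite word with finite `Θ`-defect has infinitely many
`Θ`-palindromic prefixes. -/
theorem infinitely_many_palindromic_prefixes
    {A : Type*} [Fintype A] (Θ : List A → List A) (hΘ : IsAntimorphism Θ)
    (u : ℕ → A) (hrec : Recurrent u) (hdef : FiniteDefect Θ u) :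
    ∀ N : ℕ, ∃ n : ℕ, N < n ∧ Θ (prefixWord u n) = prefixWord u n := by
  intro N
  classical
  obtain ⟨C, hC⟩ := hdef
  set P : ℕ → ℕ := fun m => (palSet Θ (prefixWord u m)).ncard with hP
  set g : ℕ → ℤ := fun m => (m : ℤ) + 1 - P m with hg
  -- the sets of palindromic factors of prefixes are increasing, gaining ≤ 1 element per step
  have hPmono : ∀ m, P m ≤ P (m + 1) := by
    intro m
    exact Set.ncard_le_ncard (palSet_mono Θ (prefixWord_prefix u (Nat.le_succ m)))
      (palSet_finite Θ _)
  have hPsucc : ∀ m, P (m + 1) ≤ P m + 1 := by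
    intro m
    have hsub : palSet Θ (prefixWord u m) ⊆ palSet Θ (prefixWord u (m + 1)) :=
      palSet_mono Θ (prefixWord_prefix u (Nat.le_succ m))
    have hdiff : (palSet Θ (prefixWord u (m + 1)) \ palSet Θ (prefixWord u m)).ncard ≤ 1 := by
      have hsing : (palSet Θ (prefixWord u (m + 1)) \ palSet Θ (prefixWord u m)).Subsingleton := by
        rw [prefixWord_succ]
        exact newPal_subsingleton hΘ _ _
      rcases hsing.eq_empty_or_singleton with h | ⟨x, h⟩ <;> rw [h] <;> simp
    calc P (m + 1) = (palSet Θ (prefixWord u m)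
          ∪ (palSet Θ (prefixWord u (m + 1)) \ palSet Θ (prefixWord u m))).ncard := by
          rw [Set.union_diff_cancel hsub]
      _ ≤ P m + (palSet Θ (prefixWord u (m + 1)) \ palSet Θ (prefixWord u m)).ncard :=
          Set.ncard_union_le _ _
      _ ≤ P m + 1 := by omega
  have hmono : Monotone g := by
    apply monotone_nat_of_le_succ
    intro m
    have h1 := hPsucc m
    simp only [hg]
    push_cast
    omega
  -- g is bounded above
  have hbdd : ∀ m, g m ≤ C + ((Set.univ : Set (Set A)).ncard : ℤ) := by
    intro m
    have h1 : defect Θ (prefixWord u m) ≤ C := hC _ ⟨0, occursAt_prefixWord u m⟩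
    have h2 : (gammaTheta Θ (prefixWord u m) : ℤ) ≤ ((Set.univ : Set (Set A)).ncard : ℤ) := by
      exact_mod_cast Set.ncard_le_ncard (Set.subset_univ _) Set.finite_univ
    have h3 : defect Θ (prefixWord u m)
        = (m : ℤ) + 1 - gammaTheta Θ (prefixWord u m) - P m := by
      unfold defect
      rw [length_prefixWord]
    simp only [hg]
    omega
  -- hence g is eventually constant
  obtain ⟨M, ⟨n₀, hn₀⟩, hmax⟩ := Int.exists_greatest_of_bdd
    (P := fun z => ∃ m, g m = z)
    ⟨C + ((Set.univ : Set (Set A)).ncard : ℤ), fun z ⟨m, hm⟩ => hm ▸ hbdd m⟩ ⟨g 0, 0, rfl⟩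
  have hconst : ∀ m, n₀ ≤ m → g m = M := fun m hm =>
    le_antisymm (hmax _ ⟨m, rfl⟩) (hn₀ ▸ hmono hm)
  -- so from index n₀ on, each step creates a brand new palindromic factor
  have hnew : ∀ m, n₀ ≤ m → ∃ s, s ∈ palSet Θ (prefixWord u (m + 1)) ∧
      s ∉ palSet Θ (prefixWord u m) := by
    intro m hm
    have e1 : g (m + 1) = g m := by
      rw [hconst m hm, hconst (m + 1) (le_trans hm (Nat.le_succ m))]
    have e2 : P (m + 1) = P m + 1 := by
      simp only [hg] at e1
      push_cast at e1
      omega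
    by_contra h
    push_neg at h
    have hsub : palSet Θ (prefixWord u (m + 1)) ⊆ palSet Θ (prefixWord u m) := h
    have : P (m + 1) ≤ P m := Set.ncard_le_ncard hsub (palSet_finite Θ _)
    omega
  -- main argument
  set n := max (n₀ + 1) (N + 1) with hn
  have hwocc : OccursAt u (prefixWord u n) 0 := occursAt_prefixWord u n
  obtain ⟨i, hi1, hi2⟩ := hrec (prefixWord u n) ⟨0, hwocc⟩ 1
  have hex : ∃ j, 1 ≤ j ∧ (OccursAt u (prefixWord u n) j ∨ OccursAt u (Θ (prefixWord u n)) j) :=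
    ⟨i, hi1, Or.inl hi2⟩
  obtain ⟨j, ⟨hj1, hjocc⟩, hjmin⟩ :
      ∃ j, (1 ≤ j ∧ (OccursAt u (prefixWord u n) j ∨ OccursAt u (Θ (prefixWord u n)) j)) ∧
        ∀ i' < j, ¬ (1 ≤ i' ∧ (OccursAt u (prefixWord u n) i' ∨
          OccursAt u (Θ (prefixWord u n)) i')) :=
    ⟨Nat.find hex, Nat.find_spec hex, fun m hm => Nat.find_min hex hm⟩
  obtain ⟨j', rfl⟩ : ∃ j', j = j' + 1 := ⟨j - 1, by omega⟩
  -- the new palindrome created at step j' + n + 1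
  obtain ⟨s, hs1, hs2⟩ := hnew (j' + n) (by omega)
  have hpal : Θ s = s := hs1.2
  have hnot : ¬ s <:+: prefixWord u (j' + n) := fun h => hs2 ⟨h, hpal⟩
  have hsfx : s <:+ prefixWord u (j' + n + 1) := by
    have hinf : s <:+: prefixWord u (j' + n) ++ [u (j' + n)] := by
      rw [← prefixWord_succ]
      exact hs1.1
    rcases infix_concat hinf with h | h
    · rwa [← prefixWord_succ] at h
    · exact absurd h hnot
  have hNlt : N < j' + n + 1 := by
    have : N + 1 ≤ n := le_max_right _ _
    omega
  refine ⟨j' + n + 1, hNlt, ?_⟩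
  rcases hjocc with hW | hW
  · -- the prefix of length n occurs at j' + 1
    refine final_step hΘ u n j' (prefixWord u n) (length_prefixWord u n) hW
      (Or.inl ((prefixWord_prefix u (by omega : n ≤ j' + n)).isInfix))
      (fun i' h1 h2 hocc => hjmin i' h2 ⟨h1, Or.inr hocc⟩) s hsfx hpal hnot
  · -- Θ of the prefix of length n occurs at j' + 1
    refine final_step hΘ u n j' (Θ (prefixWord u n))
      (by rw [theta_length hΘ, length_prefixWord]) hW ?_
      (fun i' h1 h2 hocc => hjmin i' h2 ⟨h1, Or.inl (by rwa [hΘ.2] at hocc)⟩)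
      s hsfx hpal hnot
    right
    rw [hΘ.2]
    exact (prefixWord_prefix u (by omega : n ≤ j' + n)).isInfix
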